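/- arXiv:2307.15596 — 6 statements merged into one kernel-verified Lean document; each statement's English description precedes it below -/
import Mathlib

section
/- Let g(x) = (1/2)⟨Ax, x⟩ + ⟨b, x⟩ with A symmetric positive-semidefinite. Then for every x and ε ≥ 0, the ε-subdifferential of g at x equals { A(x + e) + b : (1/2)⟨Ae, e⟩ ≤ ε }. -/
open RealInnerProductSpace

theorem stmt_3 {n : ℕ}
    (A : EuclideanSpace ℝ (Fin n) →ₗ[ℝ] EuclideanSpace ℝ (Fin n))
    (hsym : ∀ x y, ⟪A x, y⟫ = ⟪x, A y⟫) (hpsd : ∀ x, 0 ≤ ⟪A x, x⟫)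
    (b x : EuclideanSpace ℝ (Fin n)) (ε : ℝ) (hε : 0 ≤ ε) :
    {v | ∀ y, ⟪v, y - x⟫ ≤
        (1 / 2 * ⟪A y, y⟫ + ⟪b, y⟫) - (1 / 2 * ⟪A x, x⟫ + ⟪b, x⟫) + ε} =
      {v | ∃ e, 1 / 2 * ⟪A e, e⟫ ≤ ε ∧ v = A (x + e) + b} := by
  have expand : ∀ u w : EuclideanSpace ℝ (Fin n),
      ⟪A (u + w), u + w⟫ = ⟪A u, u⟫ + 2 * ⟪A u, w⟫ + ⟪A w, w⟫ := by
    intro u w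
    have h1 : ⟪A w, u⟫ = ⟪A u, w⟫ := by rw [hsym w u, real_inner_comm]
    rw [map_add, inner_add_left, inner_add_right, inner_add_right, h1]
    ring
  ext v
  simp only [Set.mem_setOf_eq]
  constructor
  · intro h
    set w := v - A x - b with hw
    have hkey : ∀ d, ⟪w, d⟫ ≤ 1 / 2 * ⟪A d, d⟫ + ε := by
      intro d
      have h2 := h (x + d)
      rw [add_sub_cancel_left, expand x d, inner_add_right] at h2
      have h3 : ⟪w, d⟫ = ⟪v, d⟫ - ⟪A x, d⟫ - ⟪b, d⟫ := by
        rw [hw, inner_sub_left, inner_sub_left]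
      rw [h3]
      linarith
    have hker : ∀ u, A u = 0 → ⟪w, u⟫ = 0 := by
      intro u hu
      by_contra hne
      have h1 : ∀ t : ℝ, t * ⟪w, u⟫ ≤ ε := by
        intro t
        have h2 := hkey (t • u)
        rw [map_smul, hu, smul_zero, inner_zero_left, real_inner_smul_right] at h2
        linarith
      have h2 := h1 ((ε + 1) / ⟪w, u⟫)
      rw [div_mul_cancel₀ _ hne] at h2
      linarith
    have hmem : w ∈ LinearMap.range A := by
      have horth : (LinearMap.range A)ᗮ = LinearMap.ker A := by
        ext u
        simp only [Submodule.mem_orthogonal, LinearMap.mem_range, LinearMap.mem_ker]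
        constructor
        · intro hu
          have h4 : ⟪A u, A u⟫ = 0 := by
            rw [← hsym]
            exact hu (A (A u)) ⟨A u, rfl⟩
          exact inner_self_eq_zero.mp h4
        · rintro hu z ⟨y, rfl⟩
          rw [hsym, hu, inner_zero_right]
      have h5 := Submodule.orthogonal_orthogonal (LinearMap.range A)
      rw [horth] at h5
      rw [← h5, Submodule.mem_orthogonal]
      intro u hu
      rw [real_inner_comm]
      exact hker u (LinearMap.mem_ker.mp hu)
    obtain ⟨e, he⟩ := hmem
    have h6 := hkey e
    rw [← he, hsym] at h6
    rw [real_inner_comm] at h6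
    refine ⟨e, by linarith, ?_⟩
    have : v = w + A x + b := by rw [hw]; abel
    rw [this, ← he, map_add]
    abel
  · rintro ⟨e, he, rfl⟩
    intro y
    have hp := hpsd (y - x - e)
    have hexp : ⟪A (y - x - e), y - x - e⟫ =
        ⟪A (y - x), y - x⟫ - 2 * ⟪A (y - x), e⟫ + ⟪A e, e⟫ := by
      have := expand (y - x) (-e)
      simpa [sub_eq_add_neg, inner_neg_left, inner_neg_right, map_neg] using this
    have hy : ⟪A y, y⟫ = ⟪A x, x⟫ + 2 * ⟪A x, y - x⟫ + ⟪A (y - x), y - x⟫ := by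
      have := expand x (y - x)
      simpa using this
    have hlhs : ⟪A (x + e) + b, y - x⟫ = ⟪A x, y - x⟫ + ⟪A e, y - x⟫ + ⟪b, y - x⟫ := by
      rw [map_add, inner_add_left, inner_add_left]
    have hby : ⟪b, y⟫ - ⟪b, x⟫ = ⟪b, y - x⟫ := by rw [inner_sub_right]
    have hcomm : ⟪A (y - x), e⟫ = ⟪A e, y - x⟫ := by rw [hsym, real_inner_comm]
    rw [hlhs]
    rw [hcomm] at hexp
    linarith [hp, hexp, hy, he, hby]
end

section
/- For g(x) = (2λ)⁻¹‖x - x̄‖² with λ > 0 and fixed x̄ ∈ ℝⁿ, the ε-subdifferential at any x is ∂_ε g(x) = { λ⁻¹(x - x̄ + e) : ‖e‖² ≤ 2λε }. -/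
/-!
Writing `e = λ v - (x - x̄)` and expanding the square, the ε-subgradient inequality at `y` becomes
`2⟪e, y - x⟫ - ‖y - x‖² ≤ 2λε`. Since `2⟪e, d⟫ - ‖d‖² = ‖e‖² - ‖e - d‖²`, the supremum of the left
side over `y` is `‖e‖²`, attained at `y = x + e`.
-/

open RealInnerProductSpace

variable {E : Type*} [NormedAddCommGroup E] [InnerProductSpace ℝ E]

lemma two_inner_sub_norm_sq_eq (e d : E) : 2 * ⟪e, d⟫ - ‖d‖ ^ 2 = ‖e‖ ^ 2 - ‖e - d‖ ^ 2 := by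
  rw [norm_sub_sq_real]
  ring

lemma forall_two_inner_sub_norm_sq_le_iff (e x : E) (c : ℝ) :
    (∀ y, 2 * ⟪e, y - x⟫ - ‖y - x‖ ^ 2 ≤ c) ↔ ‖e‖ ^ 2 ≤ c := by
  refine ⟨fun h => ?_, fun h y => ?_⟩
  · have hmax := h (x + e)
    rwa [add_sub_cancel_left, two_inner_sub_norm_sq_eq, sub_self, norm_zero,
      zero_pow two_ne_zero, sub_zero] at hmax
  · rw [two_inner_sub_norm_sq_eq]
    linarith [sq_nonneg ‖e - (y - x)‖]

lemma inner_le_sq_dist_sub_sq_dist_add_iff {lam : ℝ} (hlam : 0 < lam) (xb x v y : E) (ε : ℝ) :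
    ⟪v, y - x⟫ ≤ (2 * lam)⁻¹ * ‖y - xb‖ ^ 2 - (2 * lam)⁻¹ * ‖x - xb‖ ^ 2 + ε ↔
      2 * ⟪lam • v - (x - xb), y - x⟫ - ‖y - x‖ ^ 2 ≤ 2 * lam * ε := by
  have hexpand : ‖y - xb‖ ^ 2 = ‖x - xb‖ ^ 2 + 2 * ⟪x - xb, y - x⟫ + ‖y - x‖ ^ 2 := by
    rw [show y - xb = (x - xb) + (y - x) by abel, norm_add_sq_real]
  have hscale : (2 * lam)⁻¹ * (‖x - xb‖ ^ 2 + 2 * ⟪x - xb, y - x⟫ + ‖y - x‖ ^ 2)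
        - (2 * lam)⁻¹ * ‖x - xb‖ ^ 2 + ε - ⟪v, y - x⟫ =
      (2 * lam)⁻¹ * (2 * lam * ε - (2 * (lam * ⟪v, y - x⟫ - ⟪x - xb, y - x⟫) - ‖y - x‖ ^ 2)) := by
    field_simp
    ring
  rw [inner_sub_left (lam • v), real_inner_smul_left, hexpand, ← sub_nonneg, hscale,
    mul_nonneg_iff_of_pos_left (by positivity), sub_nonneg]

theorem stmt_4_general {n : ℕ} (lam : ℝ) (hlam : 0 < lam)
    (xb x : EuclideanSpace ℝ (Fin n)) (ε : ℝ) :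
    {v | ∀ y, ⟪v, y - x⟫ ≤
        (2 * lam)⁻¹ * ‖y - xb‖ ^ 2 - (2 * lam)⁻¹ * ‖x - xb‖ ^ 2 + ε} =
      {v | ∃ e, ‖e‖ ^ 2 ≤ 2 * lam * ε ∧ v = lam⁻¹ • (x - xb + e)} := by
  ext v
  simp only [Set.mem_ofPred_eq, inner_le_sq_dist_sub_sq_dist_add_iff hlam,
    forall_two_inner_sub_norm_sq_le_iff]
  constructor
  · intro hv
    refine ⟨_, hv, ?_⟩
    rw [add_sub_cancel, smul_smul, inv_mul_cancel₀ hlam.ne', one_smul]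
  · rintro ⟨e, he, rfl⟩
    rwa [smul_smul, mul_inv_cancel₀ hlam.ne', one_smul, add_sub_cancel_left]

theorem stmt_4 {n : ℕ} (lam : ℝ) (hlam : 0 < lam)
    (xb x : EuclideanSpace ℝ (Fin n)) (ε : ℝ) (hε : 0 ≤ ε) :
    {v | ∀ y, ⟪v, y - x⟫ ≤
        (2 * lam)⁻¹ * ‖y - xb‖ ^ 2 - (2 * lam)⁻¹ * ‖x - xb‖ ^ 2 + ε} =
      {v | ∃ e, ‖e‖ ^ 2 ≤ 2 * lam * ε ∧ v = lam⁻¹ • (x - xb + e)} :=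
  stmt_4_general lam hlam xb x ε
end

section
/- If a sequence {xᵏ} in ℝⁿ is bounded and satisfies ‖x^{k+1} - xᵏ‖ → 0, then the set of its accumulation points is nonempty, compact, and connected. -/
/-! The cluster set `S` of a sequence lying in a compact set is nonempty and compact. If `S`
split into nonempty closed pieces `S ∩ u` and `S ∩ v`, the 1-Lipschitz function `d(·, u)` would
vanish on the first and be at least some `c > 0` on the second. As the steps of the sequence
tend to `0`, the values `d(xᵏ, u)` cannot jump from below `c / 3` to above `2c / 3`, so the
sequence visits the shell `c / 3 ≤ d(·, u) ≤ 2c / 3` infinitely often and has a cluster point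
there, which lies in neither piece. -/

open Filter Metric Set Topology

theorem frequently_mem_Ico_of_frequently_lt_of_frequently_le {α : Type*} [LinearOrder α]
    {f : ℕ → α} {a b : α} (hstep : ∀ᶠ k in atTop, f k < a → f (k + 1) < b)
    (hlo : ∃ᶠ k in atTop, f k < a) (hhi : ∃ᶠ k in atTop, a ≤ f k) :
    ∃ᶠ k in atTop, f k ∈ Ico a b := by
  rw [frequently_atTop]
  intro N
  obtain ⟨N₀, hN₀⟩ := eventually_atTop.1 hstep
  obtain ⟨k₀, hk₀N, hk₀⟩ := frequently_atTop.1 hlo (max N N₀)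
  obtain ⟨k₁, hk₁, hk₁a⟩ := frequently_atTop.1 hhi k₀
  obtain ⟨m, hm, hm₁⟩ := Nat.exists_not_and_succ_of_not_zero_of_exists
    (p := fun m => a ≤ f (k₀ + m)) (by simpa using hk₀) ⟨k₁ - k₀, by simpa [hk₁]⟩
  have hlt : f (k₀ + m) < a := not_le.1 hm
  exact ⟨k₀ + m + 1, by omega, hm₁, hN₀ _ (by omega) hlt⟩

section ClusterPoints

variable {X ι : Type*} [TopologicalSpace X] {K : Set X} {x : ι → X} {l : Filter ι}

theorem isCompact_setOf_mapClusterPt [R1Space X] (hK : IsCompact K) (hxK : ∀ k, x k ∈ K) :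
    IsCompact {a | MapClusterPt a l x} :=
  hK.closure.of_isClosed_subset isClosed_setOfPred_clusterPt fun _ ha =>
    isClosed_closure.mem_of_mapClusterPt ha <| .of_forall fun k => subset_closure (hxK k)

theorem nonempty_setOf_mapClusterPt [l.NeBot] (hK : IsCompact K) (hxK : ∀ k, x k ∈ K) :
    {a | MapClusterPt a l x}.Nonempty :=
  let ⟨a, _, ha⟩ := hK.exists_mapClusterPt_of_frequently (Frequently.of_forall (f := l) hxK)
  ⟨a, ha⟩

end ClusterPoints

section SlowlyOscillating

variable {X : Type*} [PseudoMetricSpace X] {K : Set X} {x : ℕ → X}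

theorem exists_mapClusterPt_mem_Icc (hK : IsCompact K) (hxK : ∀ k, x k ∈ K)
    (hx : Tendsto (fun k => dist (x (k + 1)) (x k)) atTop (𝓝 0)) {g : X → ℝ}
    (hg : LipschitzWith 1 g) {p q : X} (hp : MapClusterPt p atTop x)
    (hq : MapClusterPt q atTop x) {a b : ℝ} (hpa : g p < a) (haq : a < g q) (hab : a < b) :
    ∃ r, MapClusterPt r atTop x ∧ g r ∈ Icc a b := by
  have hlo : ∃ᶠ k in atTop, g (x k) < a :=
    hp.frequently (hg.continuous.continuousAt.eventually_lt continuousAt_const hpa)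
  have hhi : ∃ᶠ k in atTop, a ≤ g (x k) :=
    (hq.frequently (continuousAt_const.eventually_lt hg.continuous.continuousAt haq)).mono
      fun _ => le_of_lt
  have hstep : ∀ᶠ k in atTop, g (x k) < a → g (x (k + 1)) < b := by
    filter_upwards [hx.eventually (gt_mem_nhds (sub_pos.2 hab))] with k hk hka
    have := hg.dist_le_mul (x (k + 1)) (x k)
    rw [NNReal.coe_one, one_mul, Real.dist_eq] at this
    linarith [le_abs_self (g (x (k + 1)) - g (x k))]
  have hfreq := frequently_mem_Ico_of_frequently_lt_of_frequently_le hstep hlo hhi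
  obtain ⟨r, hr, hrx⟩ :=
    (hK.inter_right (isClosed_Icc.preimage hg.continuous)).exists_mapClusterPt_of_frequently
      (hfreq.mono fun k hk => ⟨hxK k, Ico_subset_Icc_self hk⟩)
  exact ⟨r, hrx, hr.2⟩

theorem isPreconnected_setOf_mapClusterPt (hK : IsCompact K) (hxK : ∀ k, x k ∈ K)
    (hx : Tendsto (fun k => dist (x (k + 1)) (x k)) atTop (𝓝 0)) :
    IsPreconnected {a | MapClusterPt a atTop x} := by
  set S := {a | MapClusterPt a atTop x}
  rw [isPreconnected_iff_subset_of_fully_disjoint_closed (s := S) isClosed_setOfPred_clusterPt]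
  intro u v hu hv hSuv huv
  by_contra! hne
  obtain ⟨p, hpS, hpv⟩ := not_subset.1 hne.2
  obtain ⟨q, hqS, hqu⟩ := not_subset.1 hne.1
  have hpu : p ∈ u := (hSuv hpS).resolve_right hpv
  have hSv : IsCompact (S ∩ v) := (isCompact_setOf_mapClusterPt hK hxK).inter_right hv
  obtain ⟨q₀, ⟨hq₀S, hq₀v⟩, hq₀min⟩ := hSv.exists_isMinOn
    ⟨q, hqS, (hSuv hqS).resolve_left hqu⟩ (continuous_infDist_pt u).continuousOn
  set c := infDist q₀ u
  have hc : 0 < c := (hu.notMem_iff_infDist_pos ⟨p, hpu⟩).1 (disjoint_right.1 huv hq₀v)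
  obtain ⟨r, hrS, hr⟩ :=
    exists_mapClusterPt_mem_Icc hK hxK hx (lipschitz_infDist_pt u) hpS hq₀S (a := c / 3)
      (b := 2 * c / 3) (by rw [infDist_zero_of_mem hpu]; positivity) (by linarith) (by linarith)
  rcases hSuv hrS with hru | hrv
  · rw [infDist_zero_of_mem hru] at hr
    linarith [hr.1]
  · have hcr : c ≤ infDist r u := hq₀min ⟨hrS, hrv⟩
    linarith [hr.2]

end SlowlyOscillating

theorem setOf_exists_strictMono_tendsto_eq {X : Type*} [TopologicalSpace X]
    [FirstCountableTopology X] (x : ℕ → X) :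
    {a | ∃ φ : ℕ → ℕ, StrictMono φ ∧ Tendsto (x ∘ φ) atTop (𝓝 a)} =
      {a | MapClusterPt a atTop x} := by
  ext a
  exact ⟨fun ⟨_, hφ, ha⟩ => ha.mapClusterPt.of_comp hφ.tendsto_atTop,
    MapClusterPt.tendsto_subseq⟩

theorem stmt_10 {n : ℕ} (x : ℕ → EuclideanSpace ℝ (Fin n))
    (hb : Bornology.IsBounded (Set.range x))
    (ho : Tendsto (fun k => ‖x (k + 1) - x k‖) atTop (nhds 0)) :
    ({a | ∃ φ : ℕ → ℕ, StrictMono φ ∧ Tendsto (x ∘ φ) atTop (nhds a)}.Nonempty ∧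
      IsCompact {a | ∃ φ : ℕ → ℕ, StrictMono φ ∧ Tendsto (x ∘ φ) atTop (nhds a)} ∧
      IsConnected {a | ∃ φ : ℕ → ℕ, StrictMono φ ∧ Tendsto (x ∘ φ) atTop (nhds a)}) := by
  rw [setOf_exists_strictMono_tendsto_eq]
  have hK : IsCompact (closure (range x)) := hb.isCompact_closure
  have hxK : ∀ k, x k ∈ closure (range x) := fun k => subset_closure (mem_range_self k)
  have hne := nonempty_setOf_mapClusterPt (l := atTop) hK hxK
  have hx : Tendsto (fun k => dist (x (k + 1)) (x k)) atTop (𝓝 0) := by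
    simpa only [dist_eq_norm] using ho
  exact ⟨hne, isCompact_setOf_mapClusterPt hK hxK,
    hne, isPreconnected_setOf_mapClusterPt hK hxK hx⟩
end

section
/- Let {s_k} be a strictly decreasing sequence of positive reals with s_k → 0, and suppose there exist α > 1, β > 0, and N ∈ ℕ such that s_k^α ≤ β (s_{k-1} - s_k) for all k ≥ N. Then there exists γ > 0 such that s_k ≤ γ k^{-1/(α-1)} for all sufficiently large k. -/
open Filter

lemma aux_mvt_12 (p a b : ℝ) (hp : 0 < p) (ha : 0 < a) (hab : a < b) :
    p * b ^ (-p - 1) * (b - a) ≤ a ^ (-p) - b ^ (-p) := by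
  have hb : 0 < b := ha.trans hab
  obtain ⟨c, hc, hslope⟩ := exists_hasDerivAt_eq_slope (fun t => t ^ (-p))
      (fun t => (-p) * t ^ (-p - 1)) hab
      (by
        apply ContinuousOn.rpow_const continuousOn_id
        intro x hx
        exact Or.inl (lt_of_lt_of_le ha hx.1).ne')
      (by
        intro x hx
        exact Real.hasDerivAt_rpow_const (Or.inl (ha.trans hx.1).ne'))
  have hc0 : 0 < c := ha.trans hc.1
  have hslope' : (-p) * c ^ (-p - 1) = (b ^ (-p) - a ^ (-p)) / (b - a) := hslope
  rw [eq_div_iff (sub_ne_zero.mpr hab.ne')] at hslope'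
  have hcb : b ^ (-p - 1) ≤ c ^ (-p - 1) :=
    Real.rpow_le_rpow_of_nonpos hc0 hc.2.le (by linarith)
  have hmul : p * b ^ (-p - 1) * (b - a) ≤ p * c ^ (-p - 1) * (b - a) :=
    mul_le_mul_of_nonneg_right (mul_le_mul_of_nonneg_left hcb hp.le) (by linarith)
  nlinarith [hslope']

theorem stmt_12 (s : ℕ → ℝ) (hpos : ∀ k, 0 < s k) (hdec : StrictAnti s)
    (hlim : Tendsto s atTop (nhds 0)) (α β : ℝ) (hα : 1 < α) (hβ : 0 < β)
    (N : ℕ) (hN : 1 ≤ N)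
    (hrec : ∀ k, N ≤ k → s k ^ α ≤ β * (s (k - 1) - s k)) :
    ∃ γ > (0 : ℝ), ∃ K : ℕ, ∀ k, K ≤ k → s k ≤ γ * (k : ℝ) ^ (-(1 / (α - 1))) := by
  have hp0 : 0 < α - 1 := by linarith
  set p := α - 1 with hpdef
  have hsN : 0 < s N ^ (-p) := Real.rpow_pos_of_pos (hpos N) _
  have h2p : (2 : ℝ) ^ (-p) < 1 :=
    Real.rpow_lt_one_of_one_lt_of_neg (by norm_num) (by linarith)
  set c1 := p * 2 ^ (-α) / β with hc1def
  set c2 := (1 - 2 ^ (-p)) * s N ^ (-p) with hc2def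
  have h2α : (0:ℝ) < 2 ^ (-α) := Real.rpow_pos_of_pos (by norm_num) _
  have hc1 : 0 < c1 := by positivity
  have hc2 : 0 < c2 := mul_pos (by linarith) hsN
  set c0 := min c1 c2 with hc0def
  have hc0 : 0 < c0 := lt_min hc1 hc2
  have step : ∀ k, N ≤ k → s k ^ (-p) + c0 ≤ s (k + 1) ^ (-p) := by
    intro k hk
    have ha : 0 < s (k + 1) := hpos _
    have hb : 0 < s k := hpos _
    have hab : s (k + 1) < s k := hdec (Nat.lt_succ_self k)
    have hrk := hrec (k + 1) (le_trans hk (Nat.le_succ k))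
    simp only [Nat.add_sub_cancel] at hrk
    set a := s (k + 1) with hadef
    set b := s k with hbdef
    have hmvt := aux_mvt_12 p a b hp0 ha hab
    have hpa1 : -p - 1 = -α := by rw [hpdef]; ring
    rw [hpa1] at hmvt
    by_cases hcase : b ≤ 2 * a
    · have h1 : (2 * a) ^ (-α) ≤ b ^ (-α) :=
        Real.rpow_le_rpow_of_nonpos hb hcase (by linarith)
      have h2 : (2 * a) ^ (-α) = 2 ^ (-α) * a ^ (-α) := Real.mul_rpow (by norm_num) ha.le
      have h3 : a ^ (-α) * a ^ α = 1 := by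
        rw [← Real.rpow_add ha]; simp
      have hba : a ^ α / β ≤ b - a := by
        rw [div_le_iff₀ hβ]; linarith [hrk]
      have haα : 0 < a ^ α := Real.rpow_pos_of_pos ha α
      have haα' : 0 < a ^ (-α) := Real.rpow_pos_of_pos ha _
      have key : c1 ≤ p * b ^ (-α) * (b - a) := by
        have e1 : p * (2 ^ (-α) * a ^ (-α)) * (a ^ α / β) = c1 * (a ^ (-α) * a ^ α) := by
          rw [hc1def]; ring
        have e2 : p * (2 ^ (-α) * a ^ (-α)) * (a ^ α / β) ≤ p * b ^ (-α) * (b - a) := by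
          apply mul_le_mul _ hba (by positivity) (by positivity)
          exact mul_le_mul_of_nonneg_left (h2 ▸ h1) hp0.le
        rw [e1, h3, mul_one] at e2
        exact e2
      linarith [min_le_left c1 c2]
    · push_neg at hcase
      have h1 : b ^ (-p) ≤ (2 * a) ^ (-p) :=
        Real.rpow_le_rpow_of_nonpos (by positivity) hcase.le (by linarith)
      have h2 : (2 * a) ^ (-p) = 2 ^ (-p) * a ^ (-p) := Real.mul_rpow (by norm_num) ha.le
      have h3 : s N ^ (-p) ≤ a ^ (-p) :=
        Real.rpow_le_rpow_of_nonpos ha (hdec.antitone (Nat.le_succ_of_le hk)) (by linarith)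
      have h4 : 0 < a ^ (-p) := Real.rpow_pos_of_pos ha _
      have h5 : (1 - 2 ^ (-p)) * s N ^ (-p) ≤ (1 - 2 ^ (-p)) * a ^ (-p) :=
        mul_le_mul_of_nonneg_left h3 (by linarith)
      have h6 : c2 ≤ a ^ (-p) - b ^ (-p) := by
        rw [hc2def]
        nlinarith [h1, h2]
      linarith [min_le_right c1 c2]
  have iter : ∀ n : ℕ, s N ^ (-p) + n * c0 ≤ s (N + n) ^ (-p) := by
    intro n
    induction n with
    | zero => simp
    | succ m ih =>
      have hs := step (N + m) (Nat.le_add_right N m)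
      show s N ^ (-p) + ((m + 1 : ℕ) : ℝ) * c0 ≤ s ((N + m) + 1) ^ (-p)
      push_cast
      linarith
  refine ⟨(c0 / 2) ^ (-(1 / p)), Real.rpow_pos_of_pos (by linarith) _, 2 * N, ?_⟩
  intro k hk
  have hkN : N ≤ k := by omega
  obtain ⟨n, rfl⟩ : ∃ n, k = N + n := ⟨k - N, by omega⟩
  have hNn : N ≤ n := by omega
  have hnk : ((N + n : ℕ) : ℝ) ≤ 2 * n := by
    have hNn' : (N : ℝ) ≤ n := by exact_mod_cast hNn
    push_cast
    linarith
  have hkR : (0 : ℝ) < ((N + n : ℕ) : ℝ) := by exact_mod_cast Nat.lt_of_lt_of_le hN (Nat.le_add_right N n)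
  have h6 := iter n
  have h7 : c0 / 2 * ((N + n : ℕ) : ℝ) ≤ s (N + n) ^ (-p) := by
    have e1 : c0 / 2 * ((N + n : ℕ) : ℝ) ≤ c0 / 2 * (2 * n) :=
      mul_le_mul_of_nonneg_left hnk (by linarith)
    have e2 : c0 / 2 * (2 * (n : ℝ)) = n * c0 := by ring
    linarith
  have hx : 0 < c0 / 2 * ((N + n : ℕ) : ℝ) := mul_pos (by linarith) hkR
  have h9 : (s (N + n) ^ (-p)) ^ (-(1 / p)) ≤ (c0 / 2 * ((N + n : ℕ) : ℝ)) ^ (-(1 / p)) :=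
    Real.rpow_le_rpow_of_nonpos hx h7 (by rw [neg_nonpos]; positivity)
  have h10 : (s (N + n) ^ (-p)) ^ (-(1 / p)) = s (N + n) := by
    rw [← Real.rpow_mul (hpos _).le]
    have : (-p) * (-(1 / p)) = 1 := by field_simp
    rw [this, Real.rpow_one]
  have h11 : (c0 / 2 * ((N + n : ℕ) : ℝ)) ^ (-(1 / p))
      = (c0 / 2) ^ (-(1 / p)) * ((N + n : ℕ) : ℝ) ^ (-(1 / p)) :=
    Real.mul_rpow (by linarith) (Nat.cast_nonneg _)
  rw [h10, h11] at h9
  exact h9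
end

section
/- Under the same hypotheses (positive decreasing s_k → 0 and s_k^α ≤ β(s_{k-1} - s_k) for large k, α > 1), for μ̄ := min{ (α-1)/(2β), (2^{(α-1)/α} - 1) s_{N-1}^{1-α} } > 0 one has s_k^{1-α} - s_{k-1}^{1-α} ≥ μ̄ for all k ≥ N. -/
open Filter Set

/-- Convexity-type bound via MVT: for 0 < a < b and p < 0,
`a^p - b^p ≥ (-p) * b^(p-1) * (b - a)`. -/
lemma aux_rpow_convex {a b p : ℝ} (ha : 0 < a) (hab : a < b) (hp : p < 0) :
    (-p) * b ^ (p - 1) * (b - a) ≤ a ^ p - b ^ p := by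
  obtain ⟨c, hc, hceq⟩ := exists_hasDerivAt_eq_slope (fun x => x ^ p)
    (fun x => p * x ^ (p - 1)) hab
    (by
      apply ContinuousOn.rpow_const continuousOn_id
      intro x hx
      exact Or.inl (ne_of_gt (lt_of_lt_of_le ha hx.1)))
    (fun x hx => Real.hasDerivAt_rpow_const (Or.inl (ne_of_gt (ha.trans hx.1))))
  have hc0 : 0 < c := ha.trans hc.1
  have hba : 0 < b - a := sub_pos.mpr hab
  have h1 : b ^ p - a ^ p = p * c ^ (p - 1) * (b - a) := by
    field_simp at hceq
    linarith [hceq]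
  have h2 : c ^ (p - 1) ≥ b ^ (p - 1) :=
    Real.rpow_le_rpow_of_nonpos hc0 hc.2.le (by linarith)
  have h3 : -p * (b - a) * b ^ (p - 1) ≤ -p * (b - a) * c ^ (p - 1) :=
    mul_le_mul_of_nonneg_left h2 (mul_nonneg (neg_nonneg.mpr hp.le) hba.le)
  nlinarith [h1, h3]

theorem stmt_13 (s : ℕ → ℝ) (hpos : ∀ k, 0 < s k) (hdec : StrictAnti s)
    (hlim : Tendsto s atTop (nhds 0)) (α β : ℝ) (hα : 1 < α) (hβ : 0 < β)
    (N : ℕ) (hN : 1 ≤ N)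
    (hrec : ∀ k, N ≤ k → s k ^ α ≤ β * (s (k - 1) - s k)) :
    0 < min ((α - 1) / (2 * β)) (((2 : ℝ) ^ ((α - 1) / α) - 1) * s (N - 1) ^ (1 - α)) ∧
      ∀ k, N ≤ k → min ((α - 1) / (2 * β)) (((2 : ℝ) ^ ((α - 1) / α) - 1) * s (N - 1) ^ (1 - α)) ≤
        s k ^ (1 - α) - s (k - 1) ^ (1 - α) := by
  have hα0 : 0 < α := by linarith
  have h2pow : (1 : ℝ) < (2 : ℝ) ^ ((α - 1) / α) := by
    rw [show (1:ℝ) = (2:ℝ) ^ (0:ℝ) by simp]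
    exact Real.rpow_lt_rpow_of_exponent_lt one_lt_two (div_pos (by linarith) (by linarith))
  constructor
  · apply lt_min
    · exact div_pos (by linarith) (by positivity)
    · have := Real.rpow_pos_of_pos (hpos (N-1)) (1-α)
      nlinarith
  · intro k hk
    set a := s k with ha_def
    set b := s (k - 1) with hb_def
    have hk1 : 1 ≤ k := le_trans hN hk
    have hab : a < b := hdec (Nat.sub_lt hk1 one_pos)
    have ha : 0 < a := hpos k
    have hb : 0 < b := hpos (k - 1)
    have hrk : a ^ α ≤ β * (b - a) := hrec k hk
    rcases le_or_gt (b ^ α) (2 * a ^ α) with hcase | hcase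
    · -- Case A
      refine le_trans (min_le_left _ _) ?_
      have key := aux_rpow_convex ha hab (by linarith : 1 - α < 0)
      have hbpa : b ^ (1 - α - 1) = (b ^ α)⁻¹ := by
        rw [show (1 - α - 1) = -α by ring, Real.rpow_neg hb.le]
      have hba : a ^ α / β ≤ b - a := by
        rw [div_le_iff₀ hβ]; linarith [hrk]
      have hbpos : (0:ℝ) < b ^ α := Real.rpow_pos_of_pos hb α
      have hapos : (0:ℝ) < a ^ α := Real.rpow_pos_of_pos ha α
      have h3 : (α - 1) / (2 * β) ≤ (α - 1) * (b ^ α)⁻¹ * (b - a) := by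
        rw [div_le_iff₀ (by positivity)]
        have h4 : a ^ α / β * β = a ^ α := div_mul_cancel₀ _ hβ.ne'
        have h5 : (α - 1) * (b ^ α)⁻¹ * (b - a) * (2 * β)
            ≥ (α - 1) * (b ^ α)⁻¹ * (a ^ α / β) * (2*β) := by
          have : (0:ℝ) ≤ (α - 1) * (b ^ α)⁻¹ :=
            mul_nonneg (by linarith) (inv_nonneg.mpr hbpos.le)
          nlinarith [hba]
        have h6 : (α - 1) * (b ^ α)⁻¹ * (a ^ α / β) * (2*β)
            = (α - 1) * ((b ^ α)⁻¹ * (2 * a ^ α)) := by field_simp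
        have h7 : (1:ℝ) ≤ (b ^ α)⁻¹ * (2 * a ^ α) := by
          rw [mul_comm, ← div_eq_mul_inv, le_div_iff₀ hbpos]; linarith
        nlinarith [h5, h6, h7]
      calc (α - 1) / (2 * β) ≤ (α - 1) * (b ^ α)⁻¹ * (b - a) := h3
        _ = (-(1 - α)) * b ^ (1 - α - 1) * (b - a) := by rw [hbpa]; ring
        _ ≤ a ^ (1 - α) - b ^ (1 - α) := key
    · -- Case B
      refine le_trans (min_le_right _ _) ?_
      have hbN : b ≤ s (N - 1) := hdec.antitone (Nat.sub_le_sub_right hk 1)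
      have h1 : s (N-1) ^ (1-α) ≤ b ^ (1-α) :=
        Real.rpow_le_rpow_of_nonpos hb hbN (by linarith)
      -- b^α ≥ 2 a^α ⇒ b^{1-α} ≤ (2 a^α)^{(1-α)/α} = 2^{(1-α)/α} a^{1-α}
      have h2 : (b ^ α) ^ ((1-α)/α) ≤ (2 * a ^ α) ^ ((1-α)/α) :=
        Real.rpow_le_rpow_of_nonpos (by positivity) hcase.le
          (div_nonpos_of_nonpos_of_nonneg (by linarith) hα0.le)
      have hbl : (b ^ α) ^ ((1-α)/α) = b ^ (1-α) := by
        rw [← Real.rpow_mul hb.le, mul_div_cancel₀ _ (ne_of_gt hα0)]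
      have har : (2 * a ^ α) ^ ((1-α)/α) = 2 ^ ((1-α)/α) * a ^ (1-α) := by
        rw [Real.mul_rpow (by norm_num) (by positivity),
          ← Real.rpow_mul ha.le, mul_div_cancel₀ _ (ne_of_gt hα0)]
      rw [hbl, har] at h2
      have hprod : (2:ℝ) ^ ((α-1)/α) * (2:ℝ) ^ ((1-α)/α) = 1 := by
        rw [← Real.rpow_add two_pos]
        norm_num
        rw [show (α-1)/α + (1-α)/α = 0 by ring]
        exact Real.rpow_zero 2
      have hppos : (0:ℝ) < (2:ℝ) ^ ((α-1)/α) := by positivity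
      have h3 : 2 ^ ((α-1)/α) * b ^ (1-α) ≤ a ^ (1-α) := by
        calc 2 ^ ((α-1)/α) * b ^ (1-α) ≤ 2 ^ ((α-1)/α) * (2 ^ ((1-α)/α) * a ^ (1-α)) := by
              nlinarith
          _ = a ^ (1-α) := by rw [← mul_assoc, hprod, one_mul]
      have h4 : (0:ℝ) ≤ (2:ℝ) ^ ((α-1)/α) - 1 := by linarith
      nlinarith [h1, h3, Real.rpow_pos_of_pos hb (1-α)]
end

section
/- Let g be convex, λ > 0, f C¹-smooth with ∇f L-Lipschitz, λ⁻¹ > L, and x ∈ ℝⁿ. If p is a δ-minimizer of y ↦ g(y) + (2λ)⁻¹‖y - (x - λ∇f(x))‖², then the forward-backward envelope φ_λ(x) := f(x) - (λ/2)‖∇f(x)‖² + e_λ g(x - λ∇f(x)) satisfies φ_λ(x) ≥ f(p) + g(p) - δ. -/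
open RealInnerProductSpace

/-- Convexity for extended-real-valued functions. -/
def EConvexOn {E : Type*} [NormedAddCommGroup E] [NormedSpace ℝ E] (φ : E → EReal) : Prop :=
  ∀ x y : E, ∀ a b : ℝ, 0 ≤ a → 0 ≤ b → a + b = 1 →
    φ (a • x + b • y) ≤ (a : EReal) * φ x + (b : EReal) * φ y

/-! Along the segment from `x` to `p`, the `L`-Lipschitz gradient gives the descent lemma
`f p ≤ f x + ⟪∇f x, p - x⟫ + L/2 ‖p - x‖²`. Since `L ≤ λ⁻¹`, completing the square turns its
right-hand side into at most `f x - λ/2 ‖∇f x‖² + (2λ)⁻¹ ‖p - (x - λ ∇f x)‖²`. Adding `g p` and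
using that `p` minimizes `g + (2λ)⁻¹ ‖· - (x - λ ∇f x)‖²` up to `δ` gives the bound. -/

theorem le_add_add_half_of_hasDerivAt_le {φ φ' : ℝ → ℝ} {a M : ℝ}
    (hφ : ∀ t, HasDerivAt φ (φ' t) t) (hφ' : ∀ t ∈ Set.Ioo (0 : ℝ) 1, φ' t ≤ a + M * t) :
    φ 1 ≤ φ 0 + a + M / 2 := by
  set ψ : ℝ → ℝ := fun t ↦ φ t - a * t - M / 2 * t ^ 2
  have hψ : ∀ t, HasDerivAt ψ (φ' t - a - M * t) t := fun t ↦ by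
    refine (((hφ t).sub ((hasDerivAt_id' t).const_mul a)).sub
      ((hasDerivAt_pow 2 t).const_mul (M / 2))).congr_deriv ?_
    norm_num; ring
  have hanti : AntitoneOn ψ (Set.Icc 0 1) :=
    antitoneOn_of_deriv_nonpos (convex_Icc 0 1)
      (fun t _ ↦ (hψ t).continuousAt.continuousWithinAt)
      (fun t _ ↦ (hψ t).differentiableAt.differentiableWithinAt)
      (fun t ht ↦ by rw [interior_Icc] at ht; linarith [(hψ t).deriv, hφ' t ht])
  have := hanti (by simp) (by simp) zero_le_one
  simp only [ψ] at this
  linarith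

section Descent

variable {E : Type*} [NormedAddCommGroup E] [InnerProductSpace ℝ E] [CompleteSpace E]
  {f : E → ℝ} {L : ℝ}

theorem le_add_inner_gradient_add_sq_of_lipschitz_gradient (hf : Differentiable ℝ f)
    (hlip : ∀ x y, ‖gradient f x - gradient f y‖ ≤ L * ‖x - y‖) (x y : E) :
    f y ≤ f x + ⟪gradient f x, y - x⟫ + L / 2 * ‖y - x‖ ^ 2 := by
  set v := y - x
  have hderiv : ∀ t : ℝ, HasDerivAt (fun t ↦ f (x + t • v)) ⟪gradient f (x + t • v), v⟫ t :=
    fun t ↦ by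
      have := (hf _).hasFDerivAt.comp_hasDerivAt t
        ((hasDerivAt_id t).smul_const v |>.const_add x)
      rw [← inner_gradient_left, one_smul] at this
      exact this
  have hbound : ∀ t ∈ Set.Ioo (0 : ℝ) 1,
      ⟪gradient f (x + t • v), v⟫ ≤ ⟪gradient f x, v⟫ + L * ‖v‖ ^ 2 * t := fun t ht ↦
    calc ⟪gradient f (x + t • v), v⟫
        = ⟪gradient f x, v⟫ + ⟪gradient f (x + t • v) - gradient f x, v⟫ := by
          rw [inner_sub_left]; ring
      _ ≤ ⟪gradient f x, v⟫ + L * ‖(x + t • v) - x‖ * ‖v‖ := by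
          gcongr
          exact (real_inner_le_norm _ _).trans
            (mul_le_mul_of_nonneg_right (hlip _ _) (norm_nonneg v))
      _ = ⟪gradient f x, v⟫ + L * ‖v‖ ^ 2 * t := by
          rw [add_sub_cancel_left, norm_smul, Real.norm_of_nonneg ht.1.le]; ring
  have := le_add_add_half_of_hasDerivAt_le hderiv hbound
  simp only [one_smul, zero_smul, add_zero, v, add_sub_cancel] at this
  linarith

theorem le_sub_add_sq_norm_sub_forward_step_of_lipschitz_gradient (hf : Differentiable ℝ f)
    (hlip : ∀ x y, ‖gradient f x - gradient f y‖ ≤ L * ‖x - y‖) {lam : ℝ} (hlam : 0 < lam)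
    (hlamL : lam * L ≤ 1) (x p : E) :
    f p ≤ f x - lam / 2 * ‖gradient f x‖ ^ 2 +
      (2 * lam)⁻¹ * ‖p - (x - lam • gradient f x)‖ ^ 2 := by
  set u := gradient f x
  have hsquare : (2 * lam)⁻¹ * ‖p - (x - lam • u)‖ ^ 2 =
      (2 * lam)⁻¹ * ‖p - x‖ ^ 2 + ⟪u, p - x⟫ + lam / 2 * ‖u‖ ^ 2 := by
    rw [show p - (x - lam • u) = (p - x) + lam • u by abel, norm_add_sq_real,
      real_inner_smul_right, norm_smul, Real.norm_of_nonneg hlam.le, real_inner_comm]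
    field_simp
  have hL : L / 2 ≤ (2 * lam)⁻¹ := by
    rw [← one_div, le_div_iff₀ (by positivity)]
    linarith
  have := le_add_inner_gradient_add_sq_of_lipschitz_gradient hf hlip x p
  rw [hsquare]
  nlinarith [sq_nonneg ‖p - x‖]

end Descent

theorem EReal.coe_sub_add_le_of_le_add {a b c δ : ℝ} {s e : EReal} (hs : s ≠ ⊥)
    (habc : a ≤ b + c) (h : s + c ≤ e + δ) : ((a - δ : ℝ) : EReal) + s ≤ b + e := by
  induction e with
  | bot => simp_all
  | top => simp
  | coe e =>
    induction s with
    | bot => exact absurd rfl hs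
    | top =>
      rw [EReal.top_add_coe, ← EReal.coe_add] at h
      exact absurd h (not_le.2 (EReal.coe_lt_top _))
    | coe s =>
      norm_cast at h ⊢
      linarith

theorem stmt_18_general {n : ℕ} (f : EuclideanSpace ℝ (Fin n) → ℝ) (hf : ContDiff ℝ 1 f)
    (L : ℝ)
    (hlip : ∀ x y, ‖gradient f x - gradient f y‖ ≤ L * ‖x - y‖)
    (g : EuclideanSpace ℝ (Fin n) → EReal)
    (hproper : (∀ x, g x ≠ ⊥) ∧ ∃ x, g x ≠ ⊤)
    (lam : ℝ) (hlam : 0 < lam) (hlamL : lam * L < 1)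
    (x : EuclideanSpace ℝ (Fin n)) (δ : ℝ)
    (p : EuclideanSpace ℝ (Fin n))
    (hp : g p + (((2 * lam)⁻¹ * ‖p - (x - lam • gradient f x)‖ ^ 2 : ℝ) : EReal) ≤
      (⨅ y, g y + (((2 * lam)⁻¹ * ‖y - (x - lam • gradient f x)‖ ^ 2 : ℝ) : EReal)) +
        ((δ : ℝ) : EReal)) :
    ((f p - δ : ℝ) : EReal) + g p ≤
      ((f x - lam / 2 * ‖gradient f x‖ ^ 2 : ℝ) : EReal) +
        (⨅ y, g y + (((2 * lam)⁻¹ * ‖y - (x - lam • gradient f x)‖ ^ 2 : ℝ) : EReal)) :=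
  EReal.coe_sub_add_le_of_le_add (hproper.1 p)
    (le_sub_add_sq_norm_sub_forward_step_of_lipschitz_gradient (hf.differentiable one_ne_zero)
      hlip hlam hlamL.le x p) hp

theorem stmt_18 {n : ℕ} (f : EuclideanSpace ℝ (Fin n) → ℝ) (hf : ContDiff ℝ 1 f)
    (L : ℝ) (hL : 0 < L)
    (hlip : ∀ x y, ‖gradient f x - gradient f y‖ ≤ L * ‖x - y‖)
    (g : EuclideanSpace ℝ (Fin n) → EReal)
    (hproper : (∀ x, g x ≠ ⊥) ∧ ∃ x, g x ≠ ⊤)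
    (hlsc : LowerSemicontinuous g) (hconv : EConvexOn g)
    (lam : ℝ) (hlam : 0 < lam) (hlamL : lam * L < 1)
    (x : EuclideanSpace ℝ (Fin n)) (δ : ℝ) (hδ : 0 ≤ δ)
    (p : EuclideanSpace ℝ (Fin n))
    (hp : g p + (((2 * lam)⁻¹ * ‖p - (x - lam • gradient f x)‖ ^ 2 : ℝ) : EReal) ≤
      (⨅ y, g y + (((2 * lam)⁻¹ * ‖y - (x - lam • gradient f x)‖ ^ 2 : ℝ) : EReal)) +
        ((δ : ℝ) : EReal)) :
    ((f p - δ : ℝ) : EReal) + g p ≤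
      ((f x - lam / 2 * ‖gradient f x‖ ^ 2 : ℝ) : EReal) +
        (⨅ y, g y + (((2 * lam)⁻¹ * ‖y - (x - lam • gradient f x)‖ ^ 2 : ℝ) : EReal)) :=
  stmt_18_general f hf L hlip g hproper lam hlam hlamL x δ p hp
end
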